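/- Under the hypotheses that D ≻ 0 and L ⪰ 0 are diagonal and (LA + AᵀL)/2 ≺ 4D, the equation Lπ(Ax+u) - Dx + c = 0 has a unique solution x* ∈ ℝⁿ. -/

import Mathlib

open Matrix

/-- The sigmoid function. -/
noncomputable def sig (θ : ℝ) : ℝ := 1 / (1 + Real.exp (-θ))

/-!
Write `f x = L π(A x + u) - D x + c`. For every diagonal `P` with `0 ≤ P ≤ 1/4` the matrix
`L P A - D` is nonsingular: if `D v = L P A v`, then `d_i` times the `i`-th term of
`vᵀ (4D - (LA + AᵀL)/2) v` is `l_i² p_i (Av)_i² (4 p_i - 1) ≤ 0`, so positive definiteness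
forces `v = 0`. Since `0 ≤ π' ≤ 1/4`, the mean value theorem writes `f x - f y` as
`(L P A - D)(x - y)` for such a `P`, which gives uniqueness. For existence, `∑ f_i²` is coercive,
since `D x` dominates the bounded term `L π(A x + u) + c`, so it has a global minimiser `x₀`.
The derivative `L π'(A x₀ + u) A - D` of `f` at `x₀` is onto, and along a direction it maps to
`f x₀` the function `∑ f_i²` changes at rate `2 ∑ f_i(x₀)²`, which must therefore vanish.
-/

open Filter Set Real

lemma sig_eq_sigmoid : sig = sigmoid := funext fun _ => one_div _

lemma sigmoid_mul_one_sub_mem_Icc (θ : ℝ) : sigmoid θ * (1 - sigmoid θ) ∈ Icc 0 (1 / 4) := by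
  have h₀ := sigmoid_pos θ
  have h₁ := sigmoid_lt_one θ
  constructor <;> nlinarith [sq_nonneg (sigmoid θ - 1 / 2)]

lemma exists_sigmoid_sub_eq_mul (a b : ℝ) :
    ∃ ρ ∈ Icc (0 : ℝ) (1 / 4), sigmoid a - sigmoid b = ρ * (a - b) := by
  wlog hba : b ≤ a generalizing a b
  · obtain ⟨ρ, hρ, h⟩ := this b a (le_of_not_ge hba)
    exact ⟨ρ, hρ, by linarith⟩
  rcases hba.eq_or_lt with rfl | hba
  · exact ⟨0, by norm_num, by ring⟩
  obtain ⟨θ, -, hθ⟩ := exists_hasDerivAt_eq_slope sigmoid _ hba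
    continuous_sigmoid.continuousOn fun θ _ => hasDerivAt_sigmoid θ
  refine ⟨_, sigmoid_mul_one_sub_mem_Icc θ, ?_⟩
  rw [hθ, div_mul_cancel₀ _ (sub_ne_zero.mpr hba.ne')]

lemma eq_zero_of_forall_sum_sq_le {E ι : Type*} [AddCommGroup E] [Module ℝ E] [Fintype ι]
    {F J : E → ι → ℝ} {x₀ : E} (hmin : ∀ x, ∑ i, F x₀ i ^ 2 ≤ ∑ i, F x i ^ 2)
    (hJ : Function.Surjective J) (hF : ∀ v, HasLineDerivAt ℝ F (J v) x₀ v) : F x₀ = 0 := by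
  obtain ⟨v, hv⟩ := hJ (F x₀)
  have hline :
      HasLineDerivAt ℝ (fun x => ∑ i, F x i ^ 2) (∑ i, 2 * F x₀ i * J v i) x₀ v :=
    HasDerivAt.fun_sum fun i _ =>
      ((hasDerivAt_pi.mp (hF v) i).fun_pow 2).congr_deriv (by simp)
  have hzero := (isMinOn_univ_iff.mpr hmin).hasLineDerivAt_eq_zero hline
    (Eventually.of_forall fun _ => mem_univ _)
  simp only [hv, mul_assoc, ← Finset.mul_sum, mul_eq_zero, two_ne_zero, false_or,
    ← sq] at hzero
  funext i
  exact pow_eq_zero_iff two_ne_zero |>.mp <|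
    (Finset.sum_eq_zero_iff_of_nonneg fun j _ => sq_nonneg (F x₀ j)).mp hzero i
      (Finset.mem_univ i)

lemma tendsto_sum_sq_cocompact_atTop {ι : Type*} [Fintype ι] {F : (ι → ℝ) → ι → ℝ}
    {a b : ι → ℝ} (ha : ∀ i, 0 < a i) (hF : ∀ x i, a i * |x i| - b i ≤ |F x i|) :
    Tendsto (fun x => ∑ i, F x i ^ 2) (cocompact (ι → ℝ)) atTop := by
  rw [← coprodᵢ_cocompact, Filter.coprodᵢ, tendsto_iSup]
  intro i
  have hlin : Tendsto (fun x : ι → ℝ => a i * |x i| - b i)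
      (comap (Function.eval i) (cocompact ℝ)) atTop :=
    tendsto_atTop_add_const_right _ _
      ((tendsto_norm_cocompact_atTop.comp tendsto_comap).const_mul_atTop (ha i))
  have hsq : Tendsto (fun x => F x i ^ 2) (comap (Function.eval i) (cocompact ℝ)) atTop := by
    simpa only [Function.comp_def, sq_abs] using
      (tendsto_pow_atTop two_ne_zero).comp (tendsto_atTop_mono (hF · i) hlin)
  exact tendsto_atTop_mono (fun x => Finset.single_le_sum (fun j _ => sq_nonneg (F x j))
    (Finset.mem_univ i)) hsq

section

variable {ι : Type*} [Fintype ι] (A : Matrix ι ι ℝ) (l d u c : ι → ℝ)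

noncomputable def sigmoidField (x : ι → ℝ) : ι → ℝ :=
  fun i => l i * sigmoid ((A *ᵥ x) i + u i) - d i * x i + c i

lemma continuous_sigmoidField : Continuous (sigmoidField A l d u c) := by
  unfold sigmoidField
  fun_prop

lemma abs_sigmoidField_ge (x : ι → ℝ) (i : ι) :
    |d i| * |x i| - (|l i| + |c i|) ≤ |sigmoidField A l d u c x i| := by
  set σ := sigmoid ((A *ᵥ x) i + u i)
  have hσ : |l i * σ| ≤ |l i| := by
    rw [abs_mul, abs_of_pos (sigmoid_pos _)]
    exact mul_le_of_le_one_right (abs_nonneg _) (sigmoid_le_one _)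
  have hdx : d i * x i = l i * σ + c i - sigmoidField A l d u c x i := by
    simp only [sigmoidField, σ]
    ring
  have := abs_sub (l i * σ + c i) (sigmoidField A l d u c x i)
  rw [← hdx, abs_mul] at this
  linarith [abs_add_le (l i * σ) (c i)]

variable [DecidableEq ι]

lemma diagonal_mul_sub_diagonal_mulVec_apply (ρ v : ι → ℝ) (i : ι) :
    ((diagonal (l * ρ) * A - diagonal d) *ᵥ v) i = l i * ρ i * (A *ᵥ v) i - d i * v i := by
  simp [sub_mulVec, ← mulVec_mulVec, mulVec_diagonal]

noncomputable def stabilityMatrix : Matrix ι ι ℝ :=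
  (4 : ℝ) • diagonal d - (1 / 2 : ℝ) • (diagonal l * A + Aᵀ * diagonal l)

lemma dotProduct_stabilityMatrix_mulVec (v : ι → ℝ) :
    star v ⬝ᵥ (stabilityMatrix A l d *ᵥ v) =
      ∑ i, (4 * d i * v i ^ 2 - l i * v i * (A *ᵥ v) i) := by
  have hLA : v ⬝ᵥ ((diagonal l * A) *ᵥ v) = ∑ i, l i * v i * (A *ᵥ v) i := by
    simp only [← mulVec_mulVec, mulVec_diagonal, dotProduct]
    exact Finset.sum_congr rfl fun i _ => by ring
  have hAL : v ⬝ᵥ ((Aᵀ * diagonal l) *ᵥ v) = v ⬝ᵥ ((diagonal l * A) *ᵥ v) := by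
    rw [← transpose_transpose (Aᵀ * diagonal l), mulVec_transpose, dotProduct_comm,
      ← dotProduct_mulVec, transpose_mul, diagonal_transpose, transpose_transpose]
  have hD : v ⬝ᵥ (diagonal d *ᵥ v) = ∑ i, d i * v i ^ 2 := by
    simp only [mulVec_diagonal, dotProduct]
    exact Finset.sum_congr rfl fun i _ => by ring
  simp only [stabilityMatrix, star_trivial, sub_mulVec, smul_mulVec, add_mulVec, dotProduct_sub,
    dotProduct_smul, dotProduct_add, hAL, hLA, hD, smul_eq_mul, Finset.sum_sub_distrib,
    Finset.mul_sum]
  ring_nf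

variable {A l d} in
lemma mulVec_diagonal_mul_sub_diagonal_injective (hd : ∀ i, 0 < d i)
    (hstab : (stabilityMatrix A l d).PosDef)
    {ρ : ι → ℝ} (hρ : ∀ i, ρ i ∈ Icc (0 : ℝ) (1 / 4)) :
    Function.Injective (diagonal (l * ρ) * A - diagonal d).mulVec := by
  intro x y hxy
  rw [← sub_eq_zero]
  by_contra hv
  set v := x - y
  have hv_eq : ∀ i, d i * v i = l i * ρ i * (A *ᵥ v) i := fun i => by
    have := congrFun (mulVec_sub _ x y ▸ sub_eq_zero.mpr hxy) i
    rw [diagonal_mul_sub_diagonal_mulVec_apply, Pi.zero_apply] at this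
    linarith
  have hterm : ∀ i, 4 * d i * v i ^ 2 - l i * v i * (A *ᵥ v) i ≤ 0 := fun i => by
    have : d i * (4 * d i * v i ^ 2 - l i * v i * (A *ᵥ v) i) =
        l i ^ 2 * ρ i * (A *ᵥ v) i ^ 2 * (4 * ρ i - 1) := by
      linear_combination
        (4 * d i * v i + 4 * l i * ρ i * (A *ᵥ v) i - l i * (A *ᵥ v) i) * hv_eq i
    refine nonpos_of_mul_nonpos_right (this ▸ ?_) (hd i)
    exact mul_nonpos_of_nonneg_of_nonpos (by have := (hρ i).1; positivity)
      (by linarith [(hρ i).2])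
  have hq := hstab.dotProduct_mulVec_pos hv
  rw [dotProduct_stabilityMatrix_mulVec] at hq
  exact hq.not_ge (Finset.sum_nonpos fun i _ => hterm i)

lemma exists_sigmoidField_sub_eq_mulVec (x y : ι → ℝ) :
    ∃ ρ : ι → ℝ, (∀ i, ρ i ∈ Icc (0 : ℝ) (1 / 4)) ∧
      sigmoidField A l d u c x - sigmoidField A l d u c y =
        (diagonal (l * ρ) * A - diagonal d) *ᵥ (x - y) := by
  choose ρ hρ hslope using fun i =>
    exists_sigmoid_sub_eq_mul ((A *ᵥ x) i + u i) ((A *ᵥ y) i + u i)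
  refine ⟨ρ, hρ, funext fun i => ?_⟩
  rw [diagonal_mul_sub_diagonal_mulVec_apply, mulVec_sub]
  simp only [sigmoidField, Pi.sub_apply]
  linear_combination l i * hslope i

lemma hasLineDerivAt_sigmoidField (x v : ι → ℝ) :
    HasLineDerivAt ℝ (sigmoidField A l d u c)
      ((diagonal (l * fun i => deriv sigmoid ((A *ᵥ x) i + u i)) * A - diagonal d) *ᵥ v)
      x v := by
  unfold HasLineDerivAt
  rw [hasDerivAt_pi]
  intro i
  rw [diagonal_mul_sub_diagonal_mulVec_apply]
  have hθ : HasDerivAt (fun t : ℝ => (A *ᵥ (x + t • v)) i + u i) ((A *ᵥ v) i) 0 := by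
    simp only [mulVec_add, mulVec_smul, Pi.add_apply, Pi.smul_apply, smul_eq_mul]
    simpa using (((hasDerivAt_id (0 : ℝ)).mul_const ((A *ᵥ v) i)).const_add ((A *ᵥ x) i))
      |>.add_const (u i)
  have hx : HasDerivAt (fun t : ℝ => (x + t • v) i) (v i) 0 := by
    simpa using ((hasDerivAt_id (0 : ℝ)).mul_const (v i)).const_add (x i)
  have hσ := (differentiableAt_sigmoid (x := (A *ᵥ x) i + u i)).hasDerivAt.comp_of_eq 0 hθ
    (by simp)
  exact (((hσ.const_mul (l i)).sub (hx.const_mul (d i))).add_const (c i)).congr_deriv (by ring)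

variable {A l d} in
lemma sigmoidField_injective (hd : ∀ i, 0 < d i)
    (hstab : (stabilityMatrix A l d).PosDef) :
    Function.Injective (sigmoidField A l d u c) := by
  intro x y hxy
  obtain ⟨ρ, hρ, hsub⟩ := exists_sigmoidField_sub_eq_mulVec A l d u c x y
  rw [hxy, sub_self, mulVec_sub, eq_comm, sub_eq_zero] at hsub
  exact mulVec_diagonal_mul_sub_diagonal_injective hd hstab hρ hsub

variable {A l d} in
lemma exists_sigmoidField_eq_zero (hd : ∀ i, 0 < d i)
    (hstab : (stabilityMatrix A l d).PosDef) :
    ∃ x, sigmoidField A l d u c x = 0 := by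
  have hcont : Continuous fun x => ∑ i, sigmoidField A l d u c x i ^ 2 := by
    have := continuous_sigmoidField A l d u c
    fun_prop
  obtain ⟨x₀, hmin⟩ := hcont.exists_forall_le <| tendsto_sum_sq_cocompact_atTop
    (fun i => abs_pos.mpr (hd i).ne') (abs_sigmoidField_ge A l d u c)
  have hρ : ∀ i, deriv sigmoid ((A *ᵥ x₀) i + u i) ∈ Icc (0 : ℝ) (1 / 4) := fun i => by
    rw [deriv_sigmoid]
    exact sigmoid_mul_one_sub_mem_Icc _
  have honto := mulVec_surjective_iff_isUnit.mpr
    (mulVec_injective_iff_isUnit.mp (mulVec_diagonal_mul_sub_diagonal_injective hd hstab hρ))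
  exact ⟨x₀, eq_zero_of_forall_sum_sq_le hmin honto
    (hasLineDerivAt_sigmoidField A l d u c x₀)⟩

end

theorem stmt_10_general {n : ℕ} (A : Matrix (Fin n) (Fin n) ℝ) (l d u c : Fin n → ℝ)
    (hd : ∀ i, 0 < d i)
    (hstab : ((4 : ℝ) • Matrix.diagonal d -
        (1 / 2 : ℝ) • (Matrix.diagonal l * A + Aᵀ * Matrix.diagonal l)).PosDef) :
    ∃! x : Fin n → ℝ, ∀ i,
      l i * sig ((A.mulVec x) i + u i) - d i * x i + c i = 0 := by
  have hiff : ∀ x, (∀ i, l i * sig ((A *ᵥ x) i + u i) - d i * x i + c i = 0) ↔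
      sigmoidField A l d u c x = 0 := fun x => by
    rw [sig_eq_sigmoid, funext_iff]
    rfl
  simp only [hiff]
  obtain ⟨x₀, hx₀⟩ := exists_sigmoidField_eq_zero u c hd hstab
  exact ⟨x₀, hx₀, fun y hy => sigmoidField_injective u c hd hstab (hy.trans hx₀.symm)⟩

theorem stmt_10 {n : ℕ} (A : Matrix (Fin n) (Fin n) ℝ) (l d u c : Fin n → ℝ)
    (hd : ∀ i, 0 < d i) (hl : ∀ i, 0 ≤ l i)
    (hstab : ((4 : ℝ) • Matrix.diagonal d -
        (1 / 2 : ℝ) • (Matrix.diagonal l * A + Aᵀ * Matrix.diagonal l)).PosDef) :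
    ∃! x : Fin n → ℝ, ∀ i,
      l i * sig ((A.mulVec x) i + u i) - d i * x i + c i = 0 :=
  stmt_10_general A l d u c hd hstab
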